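/- arXiv:0807.1846 — 3 statements merged into one kernel-verified Lean document; each statement's English description precedes it below -/
import Mathlib

section
/- Existence of a strict smooth supersolution (Lemma 5.2): let κ ≥ 0 and define ψ(x) = (ln((|x|² + 1)^{1/2}) + 1)² for x ∈ ℝ^d. For every A > 0 there exists C > 0 such that the function χ(t,x) = exp((C(T − t) + A)·ψ(x)) satisfies, for all t ∈ [t₁,T] and all x ∈ ℝ^d, where t₁ = max(T − A/C, 0): −∂χ/∂t(t,x) − 𝓛χ(t,x) − κ·χ(t,x) − κ·|σ(t,x)^T ∇_x χ(t,x)| > 0. -/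
open Set Filter

noncomputable section

/-- Euclidean space `ℝ^d`. -/
abbrev EV (d : ℕ) := EuclideanSpace ℝ (Fin d)

/-- Partial derivative in time `∂φ/∂t`. -/
noncomputable def timeDeriv (d : ℕ) (φ : ℝ → EV d → ℝ) (t : ℝ) (x : EV d) : ℝ :=
  deriv (fun s => φ s x) t

/-- Partial derivative in space `∂φ/∂x_i`. -/
noncomputable def spaceDeriv (d : ℕ) (φ : ℝ → EV d → ℝ) (t : ℝ) (x : EV d) (i : Fin d) : ℝ :=
  fderiv ℝ (fun y => φ t y) x (EuclideanSpace.single i 1)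

/-- Second partial derivative in space `∂²φ/∂x_i∂x_j`. -/
noncomputable def spaceDeriv2 (d : ℕ) (φ : ℝ → EV d → ℝ) (t : ℝ) (x : EV d) (i j : Fin d) : ℝ :=
  fderiv ℝ (fun y => fderiv ℝ (fun z => φ t z) y (EuclideanSpace.single j 1)) x
    (EuclideanSpace.single i 1)

/-- `φ` is `C^{1,2}`: continuous, once continuously differentiable in time and twice
continuously differentiable in space, with all these derivatives jointly continuous. -/
def IsC12 (d : ℕ) (φ : ℝ → EV d → ℝ) : Prop :=
  Continuous (fun p : ℝ × EV d => φ p.1 p.2) ∧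
  (∀ x, Differentiable ℝ (fun t => φ t x)) ∧
  (∀ t, ContDiff ℝ 2 (fun x => φ t x)) ∧
  Continuous (fun p : ℝ × EV d => timeDeriv d φ p.1 p.2) ∧
  (∀ i, Continuous (fun p : ℝ × EV d => spaceDeriv d φ p.1 p.2 i)) ∧
  (∀ i j, Continuous (fun p : ℝ × EV d => spaceDeriv2 d φ p.1 p.2 i j))

/-- The second order operator
`𝓛φ = (1/2) Σ_{i,j} (σσ^T)_{ij} ∂²φ/∂x_i∂x_j + Σ_i b_i ∂φ/∂x_i`. -/
noncomputable def Lop (d : ℕ) (b : ℝ → EV d → EV d) (σ : ℝ → EV d → Matrix (Fin d) (Fin d) ℝ)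
    (φ : ℝ → EV d → ℝ) (t : ℝ) (x : EV d) : ℝ :=
  (1/2) * ∑ i, ∑ j, (∑ k, σ t x i k * σ t x j k) * spaceDeriv2 d φ t x i j
  + ∑ i, (b t x) i * spaceDeriv d φ t x i

/-- The vector `σ(t,x)^T ∇_x φ(t,x) ∈ ℝ^d`. -/
noncomputable def sigGrad (d : ℕ) (σ : ℝ → EV d → Matrix (Fin d) (Fin d) ℝ)
    (φ : ℝ → EV d → ℝ) (t : ℝ) (x : EV d) : EV d :=
  (EuclideanSpace.equiv (Fin d) ℝ).symm (fun i => ∑ j, σ t x j i * spaceDeriv d φ t x j)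

/-- `ψ(x) = (ln((|x|² + 1)^{1/2}) + 1)²`. -/
noncomputable def psiFun (d : ℕ) (x : EV d) : ℝ :=
  (Real.log ((‖x‖ ^ 2 + 1) ^ ((1 : ℝ) / 2)) + 1) ^ 2

/-- `χ(t,x) = exp((C(T - t) + A) ψ(x))`. -/
noncomputable def chiFun (d : ℕ) (T C A : ℝ) : ℝ → EV d → ℝ :=
  fun t x => Real.exp ((C * (T - t) + A) * psiFun d x)

/-! Write `ψ = u²` with `u = log √(|x|² + 1) + 1 ≥ 1` and `a = C(T - t) + A`. Then
`χ = exp (a ψ)` is radial: `∇χ = c x` and `D²χ = α x xᵀ + c I`, where `c (|x|² + 1) = 2 a u χ` and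
`|α| (|x|² + 1)² ≤ 2a(2a + 3) u² χ`. Lipschitz coefficients grow at most like `P (1 + |x|)`, and
`(1 + |x|)² ≤ 2 (|x|² + 1)`, so the growth of `σ` and `b` is absorbed by the decay of `c` and `α`:
`𝓛χ + κχ + κ|σᵀ∇χ| ≤ K(a) ψ χ` for an increasing polynomial `K`, while `-∂ₜχ = C ψ χ`.
For `t ∈ [t₁, T]` we have `A ≤ a ≤ 2A`, so `C = K(2A) + 1` works. -/

section

variable {d : ℕ}

def psiRoot (x : EV d) : ℝ := 2⁻¹ * Real.log (‖x‖ ^ 2 + 1) + 1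

lemma psiFun_eq_sq (x : EV d) : psiFun d x = psiRoot x ^ 2 := by
  rw [psiFun, psiRoot, Real.log_rpow (by positivity)]
  ring

lemma one_le_psiRoot (x : EV d) : 1 ≤ psiRoot x := by
  have : 0 ≤ Real.log (‖x‖ ^ 2 + 1) := Real.log_nonneg (by nlinarith [sq_nonneg ‖x‖])
  rw [psiRoot]
  linarith

lemma psiRoot_le_psiFun (x : EV d) : psiRoot x ≤ psiFun d x := by
  have := one_le_psiRoot x
  rw [psiFun_eq_sq]
  nlinarith

lemma one_le_psiFun (x : EV d) : 1 ≤ psiFun d x :=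
  (one_le_psiRoot x).trans (psiRoot_le_psiFun x)

lemma hasFDerivAt_norm_sq_add_one (x : EV d) :
    HasFDerivAt (fun y : EV d => ‖y‖ ^ 2 + 1) ((2 : ℝ) • innerSL ℝ x) x :=
  ((hasStrictFDerivAt_norm_sq x).hasFDerivAt.add_const 1).congr_fderiv (by ext; simp)

lemma hasFDerivAt_psiRoot (x : EV d) :
    HasFDerivAt psiRoot ((‖x‖ ^ 2 + 1)⁻¹ • innerSL ℝ x) x := by
  refine ((((hasFDerivAt_norm_sq_add_one x).log (by positivity)).const_mul 2⁻¹).add_const 1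
    ).congr_fderiv ?_
  ext v
  simp
  ring

/-- The gradient of `exp (a ψ)` at `x` is `gradCoeff a x • x`. -/
def gradCoeff (a : ℝ) (x : EV d) : ℝ :=
  2 * a * psiRoot x * Real.exp (a * psiFun d x) / (‖x‖ ^ 2 + 1)

/-- The Hessian of `exp (a ψ)` at `x` is `hessCoeff a x • x xᵀ + gradCoeff a x • 1`. -/
def hessCoeff (a : ℝ) (x : EV d) : ℝ :=
  2 * a * Real.exp (a * psiFun d x) / (‖x‖ ^ 2 + 1) ^ 2
    * (2 * a * psiRoot x ^ 2 + 1 - 2 * psiRoot x)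

lemma hasFDerivAt_exp_mul_psiFun (a : ℝ) (x : EV d) :
    HasFDerivAt (fun y => Real.exp (a * psiFun d y)) (gradCoeff a x • innerSL ℝ x) x := by
  simp_rw [psiFun_eq_sq]
  refine ((((hasFDerivAt_psiRoot x).pow 2).const_mul a).exp).congr_fderiv ?_
  ext v
  simp [gradCoeff, psiFun_eq_sq]
  field_simp

lemma hasFDerivAt_gradCoeff (a : ℝ) (x : EV d) :
    HasFDerivAt (gradCoeff a) (hessCoeff a x • innerSL ℝ x) x := by
  have hinv := (hasDerivAt_inv (by positivity)).comp_hasFDerivAt x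
    (hasFDerivAt_norm_sq_add_one x)
  have := (((hasFDerivAt_psiRoot x).const_mul (2 * a)).mul
    (hasFDerivAt_exp_mul_psiFun a x)).mul hinv
  refine this.congr_fderiv ?_
  ext v
  simp [gradCoeff, hessCoeff, psiFun_eq_sq]
  field_simp
  ring

lemma fderiv_chiFun_single (T C A t : ℝ) (x : EV d) (i : Fin d) :
    fderiv ℝ (fun y => chiFun d T C A t y) x (EuclideanSpace.single i 1)
      = gradCoeff (C * (T - t) + A) x * x i := by
  simp [chiFun, (hasFDerivAt_exp_mul_psiFun _ x).fderiv, EuclideanSpace.inner_single_right]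

lemma spaceDeriv_chiFun (T C A t : ℝ) (x : EV d) (i : Fin d) :
    spaceDeriv d (chiFun d T C A) t x i = gradCoeff (C * (T - t) + A) x * x i :=
  fderiv_chiFun_single T C A t x i

lemma spaceDeriv2_chiFun (T C A t : ℝ) (x : EV d) (i j : Fin d) :
    spaceDeriv2 d (chiFun d T C A) t x i j
      = hessCoeff (C * (T - t) + A) x * x i * x j
        + gradCoeff (C * (T - t) + A) x * if i = j then 1 else 0 := by
  simp only [spaceDeriv2, fderiv_chiFun_single]
  generalize C * (T - t) + A = a
  have h : HasFDerivAt (fun y : EV d => gradCoeff a y * y j)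
      (gradCoeff a x • EuclideanSpace.proj j + x j • hessCoeff a x • innerSL ℝ x) x :=
    (hasFDerivAt_gradCoeff a x).mul (EuclideanSpace.proj j : EV d →L[ℝ] ℝ).hasFDerivAt
  rw [h.fderiv]
  simp [EuclideanSpace.inner_single_right, PiLp.single_apply, eq_comm]
  ring

lemma timeDeriv_chiFun (T C A t : ℝ) (x : EV d) :
    timeDeriv d (chiFun d T C A) t x = -(C * psiFun d x * chiFun d T C A t x) := by
  have h : HasDerivAt (fun s => chiFun d T C A s x)
      (chiFun d T C A t x * (C * -1 * psiFun d x)) t :=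
    (((((hasDerivAt_id t).const_sub T).const_mul C).add_const A).mul_const (psiFun d x)).exp
  rw [timeDeriv, h.deriv]
  ring

lemma gradCoeff_mul_norm_sq_add_one (a : ℝ) (x : EV d) :
    gradCoeff a x * (‖x‖ ^ 2 + 1) = 2 * a * psiRoot x * Real.exp (a * psiFun d x) := by
  rw [gradCoeff, div_mul_cancel₀ _ (by positivity)]

lemma gradCoeff_nonneg {a : ℝ} (ha : 0 ≤ a) (x : EV d) : 0 ≤ gradCoeff a x := by
  have := one_le_psiRoot x
  unfold gradCoeff
  positivity

lemma abs_hessCoeff_mul_le {a : ℝ} (ha : 0 ≤ a) (x : EV d) :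
    |hessCoeff a x| * (‖x‖ ^ 2 + 1) ^ 2
      ≤ 2 * a * (2 * a + 3) * (psiFun d x * Real.exp (a * psiFun d x)) := by
  have hu := one_le_psiRoot x
  have hfactor : |2 * a * psiRoot x ^ 2 + 1 - 2 * psiRoot x| ≤ (2 * a + 3) * psiRoot x ^ 2 := by
    rw [abs_le]
    constructor <;> nlinarith
  rw [hessCoeff, abs_mul, abs_div, abs_of_nonneg (by positivity : 0 ≤ 2 * a * Real.exp _),
    abs_of_pos (by positivity : (0 : ℝ) < (‖x‖ ^ 2 + 1) ^ 2), div_mul_eq_mul_div,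
    div_mul_cancel₀ _ (by positivity), psiFun_eq_sq]
  calc 2 * a * Real.exp (a * psiRoot x ^ 2) * |2 * a * psiRoot x ^ 2 + 1 - 2 * psiRoot x|
      ≤ 2 * a * Real.exp (a * psiRoot x ^ 2) * ((2 * a + 3) * psiRoot x ^ 2) := by
        gcongr
    _ = _ := by ring

lemma one_add_norm_mul_gradCoeff_le {a : ℝ} (ha : 0 ≤ a) (x : EV d) :
    (1 + ‖x‖) * (gradCoeff a x * ‖x‖)
      ≤ 4 * a * (psiFun d x * Real.exp (a * psiFun d x)) := by
  have hc := gradCoeff_nonneg ha x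
  calc (1 + ‖x‖) * (gradCoeff a x * ‖x‖) ≤ 2 * (gradCoeff a x * (‖x‖ ^ 2 + 1)) := by
        nlinarith [sq_nonneg (‖x‖ - 1), norm_nonneg x]
    _ ≤ 4 * a * (psiFun d x * Real.exp (a * psiFun d x)) := by
        rw [gradCoeff_mul_norm_sq_add_one]
        have := psiRoot_le_psiFun x
        have : 0 ≤ a * Real.exp (a * psiFun d x) := by positivity
        nlinarith

lemma one_add_norm_sq_mul_le {a : ℝ} (ha : 0 ≤ a) (x : EV d) :
    (1 + ‖x‖) ^ 2 * (|hessCoeff a x| * ‖x‖ ^ 2 + gradCoeff a x)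
      ≤ 8 * a * (a + 2) * (psiFun d x * Real.exp (a * psiFun d x)) := by
  have hc := gradCoeff_nonneg ha x
  have hα := abs_hessCoeff_mul_le ha x
  have hcg := gradCoeff_mul_norm_sq_add_one a x
  have hW : psiRoot x * Real.exp (a * psiFun d x) ≤ psiFun d x * Real.exp (a * psiFun d x) := by
    gcongr
    exact psiRoot_le_psiFun x
  calc (1 + ‖x‖) ^ 2 * (|hessCoeff a x| * ‖x‖ ^ 2 + gradCoeff a x)
      ≤ 2 * (‖x‖ ^ 2 + 1) * (|hessCoeff a x| * (‖x‖ ^ 2 + 1) + gradCoeff a x) := by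
        gcongr
        · nlinarith [sq_nonneg (‖x‖ - 1)]
        · linarith
    _ = 2 * (|hessCoeff a x| * (‖x‖ ^ 2 + 1) ^ 2) + 2 * (gradCoeff a x * (‖x‖ ^ 2 + 1)) := by
        ring
    _ ≤ 8 * a * (a + 2) * (psiFun d x * Real.exp (a * psiFun d x)) := by
        rw [hcg]
        nlinarith

lemma abs_apply_le_norm (x : EV d) (i : Fin d) : |x i| ≤ ‖x‖ := by
  simpa only [Real.norm_eq_abs] using PiLp.norm_apply_le x i

lemma norm_le_sum_abs_apply (x : EV d) : ‖x‖ ≤ ∑ i, |x i| := by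
  rw [EuclideanSpace.norm_eq, ← Real.sqrt_sq (Finset.sum_nonneg fun i _ => abs_nonneg (x i))]
  gcongr
  simpa only [Real.norm_eq_abs] using
    Finset.sum_sq_le_sq_sum_of_nonneg fun i _ => abs_nonneg (x i)

lemma abs_sum_le_card_mul {n : ℕ} {f : Fin n → ℝ} {Z : ℝ} (h : ∀ i, |f i| ≤ Z) :
    |∑ i, f i| ≤ n * Z :=
  (Finset.abs_sum_le_sum_abs _ _).trans (by
    simpa using Finset.sum_le_sum (s := Finset.univ) fun i _ => h i)

lemma abs_spaceDeriv_chiFun_le {T C A t : ℝ} (ha : 0 ≤ C * (T - t) + A) (x : EV d) (i : Fin d) :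
    |spaceDeriv d (chiFun d T C A) t x i| ≤ gradCoeff (C * (T - t) + A) x * ‖x‖ := by
  rw [spaceDeriv_chiFun, abs_mul, abs_of_nonneg (gradCoeff_nonneg ha x)]
  exact mul_le_mul_of_nonneg_left (abs_apply_le_norm x i) (gradCoeff_nonneg ha x)

lemma abs_spaceDeriv2_chiFun_le {T C A t : ℝ} (ha : 0 ≤ C * (T - t) + A) (x : EV d)
    (i j : Fin d) :
    |spaceDeriv2 d (chiFun d T C A) t x i j|
      ≤ |hessCoeff (C * (T - t) + A) x| * ‖x‖ ^ 2 + gradCoeff (C * (T - t) + A) x := by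
  rw [spaceDeriv2_chiFun]
  refine (abs_add_le _ _).trans (add_le_add ?_ ?_)
  · rw [abs_mul, abs_mul, mul_assoc, sq]
    gcongr <;> exact abs_apply_le_norm x _
  · split_ifs <;> simp [abs_of_nonneg (gradCoeff_nonneg ha x), gradCoeff_nonneg ha x]

section Operators

variable {b : ℝ → EV d → EV d} {σ : ℝ → EV d → Matrix (Fin d) (Fin d) ℝ}
  {φ : ℝ → EV d → ℝ} {t : ℝ} {x : EV d} {s G H : ℝ}

lemma Lop_le (hb : ‖b t x‖ ≤ s) (hσ : ∀ i j, |σ t x i j| ≤ s)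
    (hG : ∀ i, |spaceDeriv d φ t x i| ≤ G) (hH : ∀ i j, |spaceDeriv2 d φ t x i j| ≤ H) :
    Lop d b σ φ t x ≤ d ^ 3 * s ^ 2 * H / 2 + d * s * G := by
  have hs : 0 ≤ s := (norm_nonneg _).trans hb
  have hσσ : ∀ i j, |∑ k, σ t x i k * σ t x j k| ≤ d * s ^ 2 := fun i j =>
    abs_sum_le_card_mul fun k => by rw [abs_mul, sq]; gcongr <;> apply hσ
  have hdiff : |∑ i, ∑ j, (∑ k, σ t x i k * σ t x j k) * spaceDeriv2 d φ t x i j|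
      ≤ d * (d * (d * s ^ 2 * H)) :=
    abs_sum_le_card_mul fun i => abs_sum_le_card_mul fun j => by
      rw [abs_mul]; gcongr; exacts [hσσ i j, hH i j]
  have hdrift : |∑ i, b t x i * spaceDeriv d φ t x i| ≤ d * (s * G) :=
    abs_sum_le_card_mul fun i => by
      rw [abs_mul]; gcongr; exacts [(abs_apply_le_norm _ i).trans hb, hG i]
  rw [Lop]
  linarith [le_abs_self (∑ i, ∑ j, (∑ k, σ t x i k * σ t x j k) * spaceDeriv2 d φ t x i j),
    le_abs_self (∑ i, b t x i * spaceDeriv d φ t x i)]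

lemma norm_sigGrad_le (hs : 0 ≤ s) (hσ : ∀ i j, |σ t x i j| ≤ s)
    (hG : ∀ i, |spaceDeriv d φ t x i| ≤ G) :
    ‖sigGrad d σ φ t x‖ ≤ d ^ 2 * s * G := by
  have hcoord : ∀ i, |sigGrad d σ φ t x i| ≤ d * (s * G) := fun i =>
    abs_sum_le_card_mul fun j => by rw [abs_mul]; gcongr; exacts [hσ j i, hG j]
  calc ‖sigGrad d σ φ t x‖ ≤ ∑ i, |sigGrad d σ φ t x i| := norm_le_sum_abs_apply _
    _ ≤ d * (d * (s * G)) := by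
        simpa using Finset.sum_le_sum (s := Finset.univ) fun i _ => hcoord i
    _ = d ^ 2 * s * G := by ring

end Operators

lemma norm_le_mul_one_add_norm_of_lipschitz {E F : Type*} [SeminormedAddCommGroup E]
    [SeminormedAddCommGroup F] {T K : ℝ} {f : ℝ → E → F}
    (hf : ∀ t ∈ Icc 0 T, ∀ t' ∈ Icc 0 T, ∀ x x' : E, ‖f t x - f t' x'‖ ≤ K * (|t - t'| + ‖x - x'‖))
    {t : ℝ} (ht : t ∈ Icc 0 T) (x : E) :
    ‖f t x‖ ≤ (‖f T 0‖ + |K| * (T + 1)) * (1 + ‖x‖) := by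
  have hT : T ∈ Icc (0 : ℝ) T := ⟨ht.1.trans ht.2, le_rfl⟩
  have htT : |t - T| ≤ T := by
    rw [abs_sub_comm, abs_of_nonneg (by linarith [ht.2])]
    linarith [ht.1]
  have hlip := hf t ht T hT x 0
  rw [sub_zero] at hlip
  have hK : K * (|t - T| + ‖x‖) ≤ |K| * (T + ‖x‖) :=
    (mul_le_mul_of_nonneg_right (le_abs_self K) (by positivity)).trans (by gcongr)
  have := norm_sub_norm_le (f t x) (f T 0)
  have hT0 := mul_nonneg (abs_nonneg K) (mul_nonneg hT.1 (norm_nonneg x))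
  nlinarith [mul_nonneg (norm_nonneg (f T 0)) (norm_nonneg x), abs_nonneg K, hT.1]

lemma exists_linear_growth {T Kb Kσ : ℝ} (hT : 0 ≤ T) {b : ℝ → EV d → EV d}
    {σ : ℝ → EV d → Matrix (Fin d) (Fin d) ℝ}
    (hb_lip : ∀ t ∈ Icc 0 T, ∀ t' ∈ Icc 0 T, ∀ x x' : EV d,
      ‖b t x - b t' x'‖ ≤ Kb * (|t - t'| + ‖x - x'‖))
    (hσ_lip : ∀ t ∈ Icc 0 T, ∀ t' ∈ Icc 0 T, ∀ x x' : EV d, ∀ i j : Fin d,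
      |σ t x i j - σ t' x' i j| ≤ Kσ * (|t - t'| + ‖x - x'‖)) :
    ∃ P, 0 ≤ P ∧ ∀ t ∈ Icc 0 T, ∀ x : EV d,
      ‖b t x‖ ≤ P * (1 + ‖x‖) ∧ ∀ i j, |σ t x i j| ≤ P * (1 + ‖x‖) := by
  let Mb := ‖b T 0‖ + |Kb| * (T + 1)
  let Mσ : Fin d × Fin d → ℝ := fun p => |σ T 0 p.1 p.2| + |Kσ| * (T + 1)
  have hMσ : ∀ p, 0 ≤ Mσ p := fun p => by positivity
  refine ⟨Mb + ∑ p, Mσ p, by positivity, fun t ht x => ⟨?_, fun i j => ?_⟩⟩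
  · refine (norm_le_mul_one_add_norm_of_lipschitz hb_lip ht x).trans
      (mul_le_mul_of_nonneg_right ?_ (by positivity))
    exact le_add_of_nonneg_right (Finset.sum_nonneg fun p _ => hMσ p)
  · have hij : ∀ t ∈ Icc 0 T, ∀ t' ∈ Icc 0 T, ∀ x x' : EV d,
        ‖σ t x i j - σ t' x' i j‖ ≤ Kσ * (|t - t'| + ‖x - x'‖) := by
      simpa only [Real.norm_eq_abs] using fun t ht t' ht' x x' => hσ_lip t ht t' ht' x x' i j
    refine (Real.norm_eq_abs _ ▸ norm_le_mul_one_add_norm_of_lipschitz hij ht x).trans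
      (mul_le_mul_of_nonneg_right ?_ (by positivity))
    calc Mσ (i, j) ≤ ∑ p, Mσ p := Finset.single_le_sum (fun p _ => hMσ p) (Finset.mem_univ _)
      _ ≤ Mb + ∑ p, Mσ p := le_add_of_nonneg_left (by positivity)

/-- The rate `K(a)` of `𝓛χ + κχ + κ|σᵀ∇χ| ≤ K(a) ψ χ` (see `Lop_chiFun_add_le`). -/
def supersolutionRate (d : ℕ) (P κ a : ℝ) : ℝ :=
  4 * a * ((a + 2) * d ^ 3 * P ^ 2 + d * P + κ * d ^ 2 * P) + κ

lemma supersolutionRate_mono {P κ a a' : ℝ} (hP : 0 ≤ P) (hκ : 0 ≤ κ) (ha : 0 ≤ a)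
    (haa' : a ≤ a') : supersolutionRate d P κ a ≤ supersolutionRate d P κ a' := by
  have := ha.trans haa'
  unfold supersolutionRate
  gcongr

lemma Lop_chiFun_add_le {b : ℝ → EV d → EV d} {σ : ℝ → EV d → Matrix (Fin d) (Fin d) ℝ}
    {P κ T C A t : ℝ} {x : EV d} (hP : 0 ≤ P) (hκ : 0 ≤ κ) (ha : 0 ≤ C * (T - t) + A)
    (hb : ‖b t x‖ ≤ P * (1 + ‖x‖)) (hσ : ∀ i j, |σ t x i j| ≤ P * (1 + ‖x‖)) :
    Lop d b σ (chiFun d T C A) t x + κ * chiFun d T C A t x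
        + κ * ‖sigGrad d σ (chiFun d T C A) t x‖
      ≤ supersolutionRate d P κ (C * (T - t) + A) * (psiFun d x * chiFun d T C A t x) := by
  have hG := abs_spaceDeriv_chiFun_le ha x
  have hL := Lop_le hb hσ hG (abs_spaceDeriv2_chiFun_le ha x)
  have hS := norm_sigGrad_le (by positivity) hσ hG
  set a := C * (T - t) + A
  set W := psiFun d x * chiFun d T C A t x
  set G := gradCoeff a x * ‖x‖
  have hgrad : (1 + ‖x‖) * G ≤ 4 * a * W := one_add_norm_mul_gradCoeff_le ha x
  have hhess : (1 + ‖x‖) ^ 2 * (|hessCoeff a x| * ‖x‖ ^ 2 + gradCoeff a x)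
      ≤ 8 * a * (a + 2) * W := one_add_norm_sq_mul_le ha x
  have hχ : chiFun d T C A t x ≤ W :=
    le_mul_of_one_le_left (Real.exp_pos _).le (one_le_psiFun x)
  have hdiff : (d : ℝ) ^ 3 * (P * (1 + ‖x‖)) ^ 2 * (|hessCoeff a x| * ‖x‖ ^ 2 + gradCoeff a x) / 2
      ≤ d ^ 3 * P ^ 2 * (4 * a * (a + 2)) * W := by
    have := mul_le_mul_of_nonneg_left hhess (by positivity : (0 : ℝ) ≤ d ^ 3 * P ^ 2 / 2)
    linarith
  have hdrift : d * (P * (1 + ‖x‖)) * G ≤ d * P * (4 * a) * W := by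
    have := mul_le_mul_of_nonneg_left hgrad (by positivity : (0 : ℝ) ≤ d * P)
    linarith
  have hdiffusion : κ * (d ^ 2 * (P * (1 + ‖x‖)) * G) ≤ κ * d ^ 2 * P * (4 * a) * W := by
    have := mul_le_mul_of_nonneg_left hgrad (by positivity : (0 : ℝ) ≤ κ * d ^ 2 * P)
    linarith
  have hκS := mul_le_mul_of_nonneg_left hS hκ
  have hκχ := mul_le_mul_of_nonneg_left hχ hκ
  unfold supersolutionRate
  linarith

end

theorem exists_strict_smooth_supersolution_general
    (T : ℝ) (hT : 0 < T) (d : ℕ)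
    (b : ℝ → EV d → EV d) (σ : ℝ → EV d → Matrix (Fin d) (Fin d) ℝ)
    (Kb : ℝ) (hb_lip : ∀ t ∈ Icc 0 T, ∀ t' ∈ Icc 0 T, ∀ x x' : EV d,
      ‖b t x - b t' x'‖ ≤ Kb * (|t - t'| + ‖x - x'‖))
    (Kσ : ℝ) (hσ_lip : ∀ t ∈ Icc 0 T, ∀ t' ∈ Icc 0 T, ∀ x x' : EV d, ∀ i j : Fin d,
      |σ t x i j - σ t' x' i j| ≤ Kσ * (|t - t'| + ‖x - x'‖))
    (κ : ℝ) (hκ : 0 ≤ κ) :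
    ∀ A > (0 : ℝ), ∃ C > (0 : ℝ), ∀ t : ℝ, ∀ x : EV d,
      max (T - A / C) 0 ≤ t → t ≤ T →
      0 < -(timeDeriv d (chiFun d T C A) t x) - Lop d b σ (chiFun d T C A) t x
          - κ * chiFun d T C A t x - κ * ‖sigGrad d σ (chiFun d T C A) t x‖ := by
  intro A hA
  obtain ⟨P, hP, hgrowth⟩ := exists_linear_growth hT.le hb_lip hσ_lip
  have hrate : 0 ≤ supersolutionRate d P κ (2 * A) := by unfold supersolutionRate; positivity
  refine ⟨supersolutionRate d P κ (2 * A) + 1, by positivity, fun t x ht₁ htT => ?_⟩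
  set C := supersolutionRate d P κ (2 * A) + 1
  have ht₀ : 0 ≤ t := (le_max_right _ _).trans ht₁
  have hCt : C * (T - t) ≤ A := by
    have := (le_div_iff₀ (by positivity)).mp (sub_le_comm.mp ((le_max_left _ _).trans ht₁))
    linarith
  have ha : 0 ≤ C * (T - t) + A := by
    have : 0 ≤ C * (T - t) := mul_nonneg (by positivity) (sub_nonneg.mpr htT)
    linarith
  obtain ⟨hb, hσ⟩ := hgrowth t ⟨ht₀, htT⟩ x
  have hbound := Lop_chiFun_add_le hP hκ ha hb hσ
  have hmono := supersolutionRate_mono (d := d) hP hκ ha (by linarith : C * (T - t) + A ≤ 2 * A)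
  have hW : 0 < psiFun d x * chiFun d T C A t x :=
    mul_pos (one_pos.trans_le (one_le_psiFun x)) (Real.exp_pos _)
  have hrateW := mul_le_mul_of_nonneg_right hmono hW.le
  rw [timeDeriv_chiFun]
  linarith

/-- **Lemma 5.2 (existence of a strict smooth supersolution).**
For every `A > 0` there exists `C > 0` such that
`χ(t,x) = exp((C(T-t)+A)ψ(x))` satisfies
`-∂χ/∂t - 𝓛χ - κχ - κ|σ^T∇χ| > 0` on `[t₁,T] × ℝ^d`, where `t₁ = max(T - A/C, 0)`. -/
theorem exists_strict_smooth_supersolution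
    (T : ℝ) (hT : 0 < T) (d : ℕ) (hd : 0 < d)
    (b : ℝ → EV d → EV d) (σ : ℝ → EV d → Matrix (Fin d) (Fin d) ℝ)
    (Kb : ℝ) (hb_lip : ∀ t ∈ Icc 0 T, ∀ t' ∈ Icc 0 T, ∀ x x' : EV d,
      ‖b t x - b t' x'‖ ≤ Kb * (|t - t'| + ‖x - x'‖))
    (Kσ : ℝ) (hσ_lip : ∀ t ∈ Icc 0 T, ∀ t' ∈ Icc 0 T, ∀ x x' : EV d, ∀ i j : Fin d,
      |σ t x i j - σ t' x' i j| ≤ Kσ * (|t - t'| + ‖x - x'‖))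
    (κ : ℝ) (hκ : 0 ≤ κ) :
    ∀ A > (0 : ℝ), ∃ C > (0 : ℝ), ∀ t : ℝ, ∀ x : EV d,
      max (T - A / C) 0 ≤ t → t ≤ T →
      0 < -(timeDeriv d (chiFun d T C A) t x) - Lop d b σ (chiFun d T C A) t x
          - κ * chiFun d T C A t x - κ * ‖sigGrad d σ (chiFun d T C A) t x‖ :=
  exists_strict_smooth_supersolution_general T hT d b σ Kb hb_lip Kσ hσ_lip κ hκ
end
end

section
/- Comparison with a strict supersolution (key step in the proof of Theorem 5.5): let κ ≥ 0 and 0 ≤ t₁ < T. Let χ : [t₁,T] × ℝ^d → (0,∞) be a C^{1,2} function satisfying −∂χ/∂t(t,x) − 𝓛χ(t,x) − κ·χ(t,x) − κ·|σ(t,x)^T ∇_x χ(t,x)| > 0 for all (t,x) ∈ [t₁,T] × ℝ^d. Let w : [t₁,T] × ℝ^d → ℝ be continuous, a viscosity subsolution on (t₁,T) × ℝ^d of min(w, −∂w/∂t − 𝓛w − κ|w| − κ|σ^T∇w|) = 0, with w(T,·) ≤ 0, and suppose that sup_{t ∈ [t₁,T]} |w(t,x)| / χ(t,x) → 0 as |x|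 → ∞. Then w(t,x) ≤ 0 for all (t,x) ∈ [t₁,T] × ℝ^d. -/
open Set Filter

noncomputable section

/-!
Suppose `w > 0` somewhere; by continuity and `w(T,·) ≤ 0` this happens at some time `tₛ > t₁`.
For `ρ ≥ 0` the weighted ratio `(w/χ)(t,x) e^{ρ(t-t₁)}` is continuous on the strip and tends to
`0` as `|x| → ∞`, so it attains a positive maximum. Choosing `ρ` large makes the value at `tₛ`
exceed every value at time `t₁`; values at time `T` are `≤ 0`, so the maximum sits at an
interior time. There `w` is touched from above by `φ = Λ(t) χ` with `Λ(t) = m e^{-ρ(t-t₁)}`,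
and since `φ` is a strict supersolution (the term `ρΛχ` only helps) this contradicts the
viscosity subsolution property.
-/

open Topology

lemma exists_mem_Ioo_pos_of_continuousOn {f : ℝ → ℝ} {a b t₀ : ℝ}
    (hf : ContinuousOn f (Icc a b)) (hb : f b ≤ 0) (ht₀ : t₀ ∈ Icc a b) (h₀ : 0 < f t₀) :
    ∃ t ∈ Ioo a b, 0 < f t := by
  have ht₀b : t₀ < b := ht₀.2.lt_of_ne (by rintro rfl; linarith)
  rcases ht₀.1.eq_or_lt with rfl | ha
  · have hpos : ∀ᶠ t in 𝓝[>] a, 0 < f t :=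
      ((hf a ht₀).eventually (eventually_gt_nhds h₀)).filter_mono
        (nhdsWithin_le_of_mem (Icc_mem_nhdsGT ht₀b))
    exact (hpos.and (Ioo_mem_nhdsGT ht₀b)).exists.imp fun t ht => ⟨ht.2, ht.1⟩
  · exact ⟨t₀, ⟨ha, ht₀b⟩, h₀⟩

lemma exists_isMaxOn_of_decay {α E : Type*} [TopologicalSpace α] [SeminormedAddCommGroup E]
    [ProperSpace E] {s : Set α} (hs : IsCompact s) {g : α × E → ℝ}
    (hg : ContinuousOn g (s ×ˢ univ))
    (hdecay : ∀ ε > 0, ∃ M : ℝ, ∀ x : E, M ≤ ‖x‖ → ∀ t ∈ s, g (t, x) < ε)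
    {p₀ : α × E} (hp₀ : p₀ ∈ s ×ˢ univ) (hpos : 0 < g p₀) :
    ∃ p ∈ s ×ˢ univ, IsMaxOn g (s ×ˢ univ) p := by
  obtain ⟨M, hM⟩ := hdecay _ hpos
  set R := max M ‖p₀.2‖
  have hp₀K : p₀ ∈ s ×ˢ Metric.closedBall 0 R := ⟨hp₀.1, by simp [R]⟩
  obtain ⟨q, hqK, hq⟩ := (hs.prod (isCompact_closedBall 0 R)).exists_isMaxOn ⟨p₀, hp₀K⟩
    (hg.mono (prod_mono le_rfl (subset_univ _)))
  refine ⟨q, ⟨hqK.1, trivial⟩, fun p hp => ?_⟩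
  by_cases hpR : ‖p.2‖ ≤ R
  · exact hq ⟨hp.1, by simpa using hpR⟩
  · have hp_small : g p < g p₀ := hM p.2 ((le_max_left _ _).trans (not_le.1 hpR).le) p.1 hp.1
    exact hp_small.le.trans (hq hp₀K)

section WeightedRatio

variable {E : Type*} {w χ : ℝ → E → ℝ}

def weightedRatio (w χ : ℝ → E → ℝ) (ρ t₁ : ℝ) (p : ℝ × E) : ℝ :=
  w p.1 p.2 / χ p.1 p.2 * Real.exp (ρ * (p.1 - t₁))

lemma weightedRatio_left (ρ t₁ : ℝ) (x : E) :
    weightedRatio w χ ρ t₁ (t₁, x) = weightedRatio w χ 0 t₁ (t₁, x) := by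
  simp [weightedRatio]

lemma weightedRatio_nonpos {ρ t₁ : ℝ} {p : ℝ × E} (hw : w p.1 p.2 ≤ 0) (hχ : 0 < χ p.1 p.2) :
    weightedRatio w χ ρ t₁ p ≤ 0 :=
  mul_nonpos_of_nonpos_of_nonneg (div_nonpos_of_nonpos_of_nonneg hw hχ.le) (Real.exp_pos _).le

lemma continuousOn_weightedRatio [TopologicalSpace E] {ρ t₁ : ℝ} {s : Set ℝ}
    (hw : ContinuousOn (fun p : ℝ × E => w p.1 p.2) (s ×ˢ univ))
    (hχ : Continuous fun p : ℝ × E => χ p.1 p.2) (hχ_pos : ∀ t ∈ s, ∀ x, 0 < χ t x) :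
    ContinuousOn (weightedRatio w χ ρ t₁) (s ×ˢ univ) :=
  (hw.div hχ.continuousOn fun p hp => (hχ_pos p.1 hp.1 p.2).ne').mul
    (Real.continuous_exp.comp (by fun_prop)).continuousOn

lemma weightedRatio_decay [Norm E] {ρ t₁ T : ℝ} (hρ : 0 ≤ ρ)
    (hχ_pos : ∀ t ∈ Icc t₁ T, ∀ x, 0 < χ t x)
    (hw_decay : ∀ ε > (0 : ℝ), ∃ M : ℝ, ∀ x : E, M ≤ ‖x‖ → ∀ t ∈ Icc t₁ T, |w t x| / χ t x < ε) :
    ∀ ε > 0, ∃ M : ℝ, ∀ x : E, M ≤ ‖x‖ → ∀ t ∈ Icc t₁ T, weightedRatio w χ ρ t₁ (t, x) < ε := by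
  intro ε hε
  have hE := Real.exp_pos (ρ * (T - t₁))
  obtain ⟨M, hM⟩ := hw_decay (ε / Real.exp (ρ * (T - t₁))) (div_pos hε hE)
  refine ⟨M, fun x hx t ht => ?_⟩
  have hχ := hχ_pos t ht x
  calc weightedRatio w χ ρ t₁ (t, x)
      ≤ |w t x| / χ t x * Real.exp (ρ * (T - t₁)) := by
        unfold weightedRatio
        gcongr
        · exact le_abs_self _
        · exact ht.2
    _ < ε := (lt_div_iff₀ hE).1 (hM x hx t ht)

lemma exists_weightedRatio_gt {t₁ t : ℝ} {x : E} (hpos : 0 < weightedRatio w χ 0 t₁ (t, x))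
    (ht : t₁ < t) (B : ℝ) : ∃ ρ ≥ 0, B < weightedRatio w χ ρ t₁ (t, x) := by
  have hpos' : 0 < w t x / χ t x := by simpa [weightedRatio] using hpos
  have hlim : Tendsto (fun ρ => weightedRatio w χ ρ t₁ (t, x)) atTop atTop :=
    Tendsto.const_mul_atTop hpos'
      (Real.tendsto_exp_atTop.comp (tendsto_id.atTop_mul_const (sub_pos.2 ht)))
  exact ((eventually_ge_atTop 0).and (hlim.eventually_gt_atTop B)).exists

lemma eq_weightedRatio_mul (ρ t₁ : ℝ) {p : ℝ × E} (hχ : χ p.1 p.2 ≠ 0) :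
    w p.1 p.2 = weightedRatio w χ ρ t₁ p * Real.exp (-(ρ * (p.1 - t₁))) * χ p.1 p.2 := by
  rw [weightedRatio, mul_assoc (_ / _), ← Real.exp_add, add_neg_cancel, Real.exp_zero, mul_one,
    div_mul_cancel₀ _ hχ]

end WeightedRatio

section TimeMul

variable {d : ℕ} (Λ : ℝ → ℝ) (χ : ℝ → EV d → ℝ)

lemma spaceDeriv_timeMul (t : ℝ) (x : EV d) (i : Fin d) :
    spaceDeriv d (fun s y => Λ s * χ s y) t x i = Λ t * spaceDeriv d χ t x i := by
  change fderiv ℝ (Λ t • fun y => χ t y) x _ = _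
  rw [fderiv_const_smul_field]
  rfl

lemma spaceDeriv2_timeMul (t : ℝ) (x : EV d) (i j : Fin d) :
    spaceDeriv2 d (fun s y => Λ s * χ s y) t x i j = Λ t * spaceDeriv2 d χ t x i j := by
  change fderiv ℝ (fun y => fderiv ℝ (Λ t • fun z => χ t z) y _) x _ = _
  simp only [fderiv_const_smul_field]
  change fderiv ℝ (Λ t • fun y => fderiv ℝ (fun z => χ t z) y _) x _ = _
  rw [fderiv_const_smul_field]
  rfl

lemma timeDeriv_timeMul {t : ℝ} {x : EV d} (hΛ : DifferentiableAt ℝ Λ t)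
    (hχ : DifferentiableAt ℝ (fun s => χ s x) t) :
    timeDeriv d (fun s y => Λ s * χ s y) t x = deriv Λ t * χ t x + Λ t * timeDeriv d χ t x :=
  deriv_mul hΛ hχ

lemma Lop_timeMul (b : ℝ → EV d → EV d) (σ : ℝ → EV d → Matrix (Fin d) (Fin d) ℝ)
    (t : ℝ) (x : EV d) :
    Lop d b σ (fun s y => Λ s * χ s y) t x = Λ t * Lop d b σ χ t x := by
  simp only [Lop, spaceDeriv_timeMul, spaceDeriv2_timeMul, mul_add, Finset.mul_sum,
    mul_left_comm (Λ t)]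

lemma sigGrad_timeMul (σ : ℝ → EV d → Matrix (Fin d) (Fin d) ℝ) (t : ℝ) (x : EV d) :
    sigGrad d σ (fun s y => Λ s * χ s y) t x = Λ t • sigGrad d σ χ t x := by
  simp only [sigGrad, spaceDeriv_timeMul, ← map_smul]
  congr 1
  ext i
  simp only [Pi.smul_apply, smul_eq_mul, Finset.mul_sum, mul_left_comm (Λ t)]

end TimeMul

lemma IsC12.timeMul {d : ℕ} {χ : ℝ → EV d → ℝ} (hχ : IsC12 d χ) {Λ : ℝ → ℝ}
    (hΛ : ContDiff ℝ 1 Λ) : IsC12 d (fun s y => Λ s * χ s y) := by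
  obtain ⟨hχc, hχt, hχx, hχt', hχx', hχxx⟩ := hχ
  have hΛd : Differentiable ℝ Λ := hΛ.differentiable one_ne_zero
  have hΛc : Continuous fun p : ℝ × EV d => Λ p.1 := hΛd.continuous.comp continuous_fst
  refine ⟨hΛc.mul hχc, fun x => hΛd.mul (hχt x), fun t => contDiff_const.mul (hχx t), ?_,
    fun i => ?_, fun i j => ?_⟩
  · simp only [timeDeriv_timeMul _ _ (hΛd _) (hχt _ _)]
    exact ((hΛ.continuous_deriv le_rfl).comp continuous_fst |>.mul hχc).add (hΛc.mul hχt')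
  · simp only [spaceDeriv_timeMul]
    exact hΛc.mul (hχx' i)
  · simp only [spaceDeriv2_timeMul]
    exact hΛc.mul (hχxx i j)

def linearResidual (d : ℕ) (b : ℝ → EV d → EV d) (σ : ℝ → EV d → Matrix (Fin d) (Fin d) ℝ) (κ : ℝ)
    (φ : ℝ → EV d → ℝ) (t : ℝ) (x : EV d) : ℝ :=
  -(timeDeriv d φ t x) - Lop d b σ φ t x - κ * φ t x - κ * ‖sigGrad d σ φ t x‖

lemma linearResidual_timeMul {d : ℕ} (b : ℝ → EV d → EV d) (σ : ℝ → EV d → Matrix (Fin d) (Fin d) ℝ)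
    (κ : ℝ) {χ : ℝ → EV d → ℝ} {Λ : ℝ → ℝ} {t : ℝ} {x : EV d} (hΛ : DifferentiableAt ℝ Λ t)
    (hΛ₀ : 0 ≤ Λ t) (hχ : DifferentiableAt ℝ (fun s => χ s x) t) :
    linearResidual d b σ κ (fun s y => Λ s * χ s y) t x
      = Λ t * linearResidual d b σ κ χ t x - deriv Λ t * χ t x := by
  simp only [linearResidual, timeDeriv_timeMul Λ χ hΛ hχ, Lop_timeMul, sigGrad_timeMul, norm_smul,
    Real.norm_of_nonneg hΛ₀]
  ring

def IsViscositySubsolution (d : ℕ) (b : ℝ → EV d → EV d)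
    (σ : ℝ → EV d → Matrix (Fin d) (Fin d) ℝ) (κ t₁ T : ℝ) (w : ℝ → EV d → ℝ) : Prop :=
  ∀ φ : ℝ → EV d → ℝ, IsC12 d φ → ∀ t : ℝ, ∀ x : EV d, t ∈ Ioo t₁ T →
    IsLocalMaxOn (fun p : ℝ × EV d => w p.1 p.2 - φ p.1 p.2) (Ioo t₁ T ×ˢ univ) (t, x) →
    min (w t x) (-(timeDeriv d φ t x) - Lop d b σ φ t x - κ * |w t x| - κ * ‖sigGrad d σ φ t x‖)
      ≤ 0

theorem IsViscositySubsolution.not_isMaxOn_weightedRatio {d : ℕ} {b : ℝ → EV d → EV d}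
    {σ : ℝ → EV d → Matrix (Fin d) (Fin d) ℝ} {κ t₁ T : ℝ} {w χ : ℝ → EV d → ℝ}
    (hw : IsViscositySubsolution d b σ κ t₁ T w) (hχ : IsC12 d χ)
    (hχ_pos : ∀ t ∈ Icc t₁ T, ∀ x, 0 < χ t x) {ρ s : ℝ} {y : EV d} (hρ : 0 ≤ ρ)
    (hs : s ∈ Ioo t₁ T) (hsuper : 0 < linearResidual d b σ κ χ s y)
    (hmax : IsMaxOn (weightedRatio w χ ρ t₁) (Icc t₁ T ×ˢ univ) (s, y))
    (hpos : 0 < weightedRatio w χ ρ t₁ (s, y)) : False := by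
  set m := weightedRatio w χ ρ t₁ (s, y)
  set Λ : ℝ → ℝ := fun t => m * Real.exp (-(ρ * (t - t₁)))
  have hΛ : ContDiff ℝ 1 Λ := by fun_prop
  have hΛ_pos : ∀ t, 0 < Λ t := fun t => mul_pos hpos (Real.exp_pos _)
  have hΛ_deriv : HasDerivAt Λ (-ρ * Λ s) s := by
    have h : HasDerivAt (fun t => -(ρ * (t - t₁))) (-ρ) s := by
      simpa using (((hasDerivAt_id s).sub_const t₁).const_mul ρ).fun_neg
    exact (h.exp.const_mul m).congr_deriv (by simp only [Λ]; ring)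
  set φ : ℝ → EV d → ℝ := fun t x => Λ t * χ t x
  have hs' : s ∈ Icc t₁ T := Ioo_subset_Icc_self hs
  have hχs := hχ_pos s hs' y
  have htouch : w s y = φ s y := eq_weightedRatio_mul ρ t₁ (p := (s, y)) hχs.ne'
  have hle : ∀ p ∈ Icc t₁ T ×ˢ univ, w p.1 p.2 ≤ φ p.1 p.2 := fun p hp => by
    rw [eq_weightedRatio_mul (w := w) ρ t₁ (hχ_pos p.1 hp.1 p.2).ne']
    have hχp := hχ_pos p.1 hp.1 p.2
    change _ ≤ m * Real.exp _ * χ p.1 p.2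
    gcongr
    exact hmax hp
  have hlocmax : IsLocalMaxOn (fun p : ℝ × EV d => w p.1 p.2 - φ p.1 p.2)
      (Ioo t₁ T ×ˢ univ) (s, y) :=
    IsMaxOn.localize fun p hp => by
      change w p.1 p.2 - φ p.1 p.2 ≤ w s y - φ s y
      rw [htouch, sub_self, sub_nonpos]
      exact hle p ⟨Ioo_subset_Icc_self hp.1, trivial⟩
  have hφ_pos : 0 < φ s y := mul_pos (hΛ_pos s) hχs
  have hres : 0 < linearResidual d b σ κ φ s y := by
    rw [linearResidual_timeMul b σ κ hΛ_deriv.differentiableAt (hΛ_pos s).le (hχ.2.1 y s),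
      hΛ_deriv.deriv]
    nlinarith [mul_pos (hΛ_pos s) hsuper, mul_nonneg (mul_nonneg hρ (hΛ_pos s).le) hχs.le]
  have hmin := hw φ (hχ.timeMul hΛ) s y hs hlocmax
  rw [htouch, abs_of_pos hφ_pos] at hmin
  exact (lt_min hφ_pos hres).not_ge hmin

theorem comparison_with_strict_supersolution_general
    (T : ℝ) (d : ℕ)
    (b : ℝ → EV d → EV d) (σ : ℝ → EV d → Matrix (Fin d) (Fin d) ℝ)
    (κ : ℝ)
    (t₁ : ℝ)
    (χ : ℝ → EV d → ℝ) (hχ_C12 : IsC12 d χ)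
    (hχ_pos : ∀ t ∈ Icc t₁ T, ∀ x : EV d, 0 < χ t x)
    (hχ_supersol : ∀ t ∈ Icc t₁ T, ∀ x : EV d,
      0 < -(timeDeriv d χ t x) - Lop d b σ χ t x - κ * χ t x - κ * ‖sigGrad d σ χ t x‖)
    (w : ℝ → EV d → ℝ)
    (hw_cont : ContinuousOn (fun p : ℝ × EV d => w p.1 p.2) (Icc t₁ T ×ˢ univ))
    (hw_subsol : ∀ φ : ℝ → EV d → ℝ, IsC12 d φ →
      ∀ t : ℝ, ∀ x : EV d, t ∈ Ioo t₁ T →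
        IsLocalMaxOn (fun p : ℝ × EV d => w p.1 p.2 - φ p.1 p.2) (Ioo t₁ T ×ˢ univ) (t, x) →
        min (w t x)
          (-(timeDeriv d φ t x) - Lop d b σ φ t x - κ * |w t x|
            - κ * ‖sigGrad d σ φ t x‖) ≤ 0)
    (hw_T : ∀ x : EV d, w T x ≤ 0)
    (hw_decay : ∀ ε > (0 : ℝ), ∃ M : ℝ, ∀ x : EV d, M ≤ ‖x‖ →
      ∀ t ∈ Icc t₁ T, |w t x| / χ t x < ε) :
    ∀ t ∈ Icc t₁ T, ∀ x : EV d, w t x ≤ 0 := by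
  intro t₀ ht₀ x₀
  by_contra! hpos
  have hS {t : ℝ} {x : EV d} (ht : t ∈ Icc t₁ T) : (t, x) ∈ Icc t₁ T ×ˢ univ := ⟨ht, trivial⟩
  have hcont (ρ : ℝ) := continuousOn_weightedRatio (ρ := ρ) (t₁ := t₁) hw_cont hχ_C12.1 hχ_pos
  obtain ⟨ts, hts, hw_ts⟩ := exists_mem_Ioo_pos_of_continuousOn (f := fun t => w t x₀)
    (hw_cont.comp (continuous_id.prodMk continuous_const).continuousOn fun _ ht => hS ht)
    (hw_T x₀) ht₀ hpos
  have hts' := hS (x := x₀) (Ioo_subset_Icc_self hts)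
  have hc : 0 < weightedRatio w χ 0 t₁ (ts, x₀) := by
    simpa [weightedRatio] using div_pos hw_ts (hχ_pos ts hts'.1 x₀)
  obtain ⟨p₀, -, hp₀⟩ := exists_isMaxOn_of_decay isCompact_Icc (hcont 0)
    (weightedRatio_decay le_rfl hχ_pos hw_decay) hts' hc
  have hB : 0 < weightedRatio w χ 0 t₁ p₀ := hc.trans_le (hp₀ hts')
  obtain ⟨ρ, hρ, hρ_gt⟩ := exists_weightedRatio_gt hc hts.1 (weightedRatio w χ 0 t₁ p₀)
  obtain ⟨⟨s, y⟩, hsy, hmax⟩ := exists_isMaxOn_of_decay isCompact_Icc (hcont ρ)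
    (weightedRatio_decay hρ hχ_pos hw_decay) hts' (hB.trans hρ_gt)
  have hmax_gt : weightedRatio w χ 0 t₁ p₀ < weightedRatio w χ ρ t₁ (s, y) :=
    hρ_gt.trans_le (hmax hts')
  have hs₁ : s ≠ t₁ := by
    rintro rfl
    rw [weightedRatio_left ρ] at hmax_gt
    exact hmax_gt.not_ge (hp₀ hsy)
  have hsT : s ≠ T := by
    rintro rfl
    exact (hB.trans hmax_gt).not_ge (weightedRatio_nonpos (hw_T y) (hχ_pos s hsy.1 y))
  exact IsViscositySubsolution.not_isMaxOn_weightedRatio hw_subsol hχ_C12 hχ_pos hρ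
    ⟨hsy.1.1.lt_of_ne' hs₁, hsy.1.2.lt_of_ne hsT⟩ (hχ_supersol s hsy.1 y) hmax (hB.trans hmax_gt)

/-- **Comparison with a strict supersolution** (key step in the proof of Theorem 5.5).
If `χ > 0` is a `C^{1,2}` strict supersolution of the linear equation on `[t₁,T] × ℝ^d`,
`w` is a continuous viscosity subsolution of `min(w, -∂w/∂t - 𝓛w - κ|w| - κ|σ^T∇w|) = 0`
on `(t₁,T) × ℝ^d` with `w(T,·) ≤ 0` and `sup_{t ∈ [t₁,T]} |w(t,x)|/χ(t,x) → 0` as `|x| → ∞`,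
then `w ≤ 0` on `[t₁,T] × ℝ^d`. -/
theorem comparison_with_strict_supersolution
    (T : ℝ) (hT : 0 < T) (d : ℕ) (hd : 0 < d)
    (b : ℝ → EV d → EV d) (σ : ℝ → EV d → Matrix (Fin d) (Fin d) ℝ)
    (Kb : ℝ) (hb_lip : ∀ t ∈ Icc 0 T, ∀ t' ∈ Icc 0 T, ∀ x x' : EV d,
      ‖b t x - b t' x'‖ ≤ Kb * (|t - t'| + ‖x - x'‖))
    (Kσ : ℝ) (hσ_lip : ∀ t ∈ Icc 0 T, ∀ t' ∈ Icc 0 T, ∀ x x' : EV d, ∀ i j : Fin d,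
      |σ t x i j - σ t' x' i j| ≤ Kσ * (|t - t'| + ‖x - x'‖))
    (κ : ℝ) (hκ : 0 ≤ κ)
    (t₁ : ℝ) (ht₁ : 0 ≤ t₁) (ht₁T : t₁ < T)
    (χ : ℝ → EV d → ℝ) (hχ_C12 : IsC12 d χ)
    (hχ_pos : ∀ t ∈ Icc t₁ T, ∀ x : EV d, 0 < χ t x)
    (hχ_supersol : ∀ t ∈ Icc t₁ T, ∀ x : EV d,
      0 < -(timeDeriv d χ t x) - Lop d b σ χ t x - κ * χ t x - κ * ‖sigGrad d σ χ t x‖)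
    (w : ℝ → EV d → ℝ)
    (hw_cont : ContinuousOn (fun p : ℝ × EV d => w p.1 p.2) (Icc t₁ T ×ˢ univ))
    (hw_subsol : ∀ φ : ℝ → EV d → ℝ, IsC12 d φ →
      ∀ t : ℝ, ∀ x : EV d, t ∈ Ioo t₁ T →
        IsLocalMaxOn (fun p : ℝ × EV d => w p.1 p.2 - φ p.1 p.2) (Ioo t₁ T ×ˢ univ) (t, x) →
        min (w t x)
          (-(timeDeriv d φ t x) - Lop d b σ φ t x - κ * |w t x|
            - κ * ‖sigGrad d σ φ t x‖) ≤ 0)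
    (hw_T : ∀ x : EV d, w T x ≤ 0)
    (hw_decay : ∀ ε > (0 : ℝ), ∃ M : ℝ, ∀ x : EV d, M ≤ ‖x‖ →
      ∀ t ∈ Icc t₁ T, |w t x| / χ t x < ε) :
    ∀ t ∈ Icc t₁ T, ∀ x : EV d, w t x ≤ 0 :=
  comparison_with_strict_supersolution_general T d b σ κ t₁ χ hχ_C12 hχ_pos hχ_supersol w hw_cont
    hw_subsol hw_T hw_decay
end
end

section
/- Two-barrier reflection inequality (intermediate claim in the proof of Lemma 2.4): let p ∈ (1,2) and let Y, Y', L, L' : [0,T] → ℝ be continuous functions with Y(s) ≥ L(s) and Y'(s) ≥ L'(s) for all s ∈ [0,T]. Let μ and μ' be finite Borel measures on [0,T] such that μ({s : Y(s) ≠ L(s)}) = 0 and μ'({s : Y'(s) ≠ L'(s)}) = 0. Then ∫_{[0,T]} θ_p(Y(s) − Y'(s)) μ(ds) − ∫_{[0,T]} θ_p(Y(s) − Y'(s)) μ'(ds) ≤ ∫_{[0,T]} θ_p(L(s) − L'(s)) μ(ds) − ∫_{[0,T]} θ_p(L(s) − L'(s)) μ'(ds). -/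
/-!
`θ_p` is odd and increasing on `[0, ∞)`, hence monotone, and a monotone function of a continuous
function is bounded on a compact set, so all four integrals are finite. Where `μ` charges,
`Y = L`, so `Y - Y' = L - Y' ≤ L - L'`; where `μ'` charges, `Y' = L'`, so
`L - L' ≤ Y - L' = Y - Y'`. By monotonicity of `θ_p` the `μ`-integral of `θ_p(Y - Y')` is at
most that of `θ_p(L - L')`, and the reverse holds for `μ'`.
-/

open Set MeasureTheory

noncomputable section

/-- The signed power function `θ_p(x) = |x|^{p-1} sgn(x)`
(i.e. `θ_p(x) = |x|^{p-2} x` for `x ≠ 0` and `θ_p(0) = 0`). -/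
noncomputable def thetaP (p : ℝ) (x : ℝ) : ℝ := |x| ^ (p - 1) * Real.sign x

lemma thetaP_neg (p x : ℝ) : thetaP p (-x) = -thetaP p x := by
  simp [thetaP, Real.sign_neg]

lemma thetaP_of_pos (p : ℝ) {x : ℝ} (hx : 0 < x) : thetaP p x = x ^ (p - 1) := by
  simp [thetaP, Real.sign_of_pos hx, abs_of_pos hx]

lemma monotone_thetaP {p : ℝ} (hp : 1 ≤ p) : Monotone (thetaP p) := by
  refine monotone_of_odd_of_monotoneOn_nonneg (thetaP_neg p) fun x (hx : 0 ≤ x) y _ hxy => ?_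
  rcases hx.eq_or_lt with rfl | hx
  · rcases hxy.eq_or_lt with rfl | hy
    · rfl
    · rw [thetaP_of_pos p hy, thetaP, Real.sign_zero, mul_zero]
      positivity
  · rw [thetaP_of_pos p hx, thetaP_of_pos p (hx.trans_le hxy)]
    exact Real.rpow_le_rpow hx.le hxy (by linarith)

lemma Monotone.integrableOn_comp_of_continuousOn {α : Type*} [TopologicalSpace α]
    [T2Space α] [MeasurableSpace α] [OpensMeasurableSpace α] {g : ℝ → ℝ} (hg : Monotone g)
    {f : α → ℝ} {K : Set α} (hK : IsCompact K) (hf : ContinuousOn f K) (μ : Measure α)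
    [IsFiniteMeasure μ] : IntegrableOn (g ∘ f) K μ := by
  obtain ⟨a, ha⟩ := hK.bddBelow_image hf
  obtain ⟨b, hb⟩ := hK.bddAbove_image hf
  refine Integrable.mono' (integrable_const (max |g a| |g b|))
    (hg.measurable.comp_aemeasurable (hf.aemeasurable hK.measurableSet)).aestronglyMeasurable ?_
  filter_upwards [ae_restrict_mem hK.measurableSet] with x hx
  exact abs_le_max_abs_abs (hg (ha ⟨x, hx, rfl⟩)) (hg (hb ⟨x, hx, rfl⟩))

lemma ae_restrict_eq_of_measure_sep_ne_eq_zero {α β : Type*} [MeasurableSpace α]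
    {μ : Measure α} {S : Set α} (hS : MeasurableSet S) {f g : α → β}
    (h : μ {x ∈ S | f x ≠ g x} = 0) : f =ᵐ[μ.restrict S] g := by
  rw [Filter.EventuallyEq, ae_restrict_iff' hS]
  filter_upwards [measure_eq_zero_iff_ae_notMem.1 h] with x hx hxS
  exact not_not.1 fun hne => hx ⟨hxS, hne⟩

theorem two_barrier_reflection_inequality_general
    (T : ℝ) (p : ℝ) (hp : p ∈ Set.Ioo (1 : ℝ) 2)
    (Y Y' L L' : ℝ → ℝ)
    (hY : ContinuousOn Y (Icc 0 T)) (hY' : ContinuousOn Y' (Icc 0 T))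
    (hL : ContinuousOn L (Icc 0 T)) (hL' : ContinuousOn L' (Icc 0 T))
    (hYL : ∀ s ∈ Icc 0 T, L s ≤ Y s) (hY'L' : ∀ s ∈ Icc 0 T, L' s ≤ Y' s)
    (μ μ' : Measure ℝ) [IsFiniteMeasure μ] [IsFiniteMeasure μ']
    (hμ : μ {s ∈ Icc 0 T | Y s ≠ L s} = 0)
    (hμ' : μ' {s ∈ Icc 0 T | Y' s ≠ L' s} = 0) :
    (∫ s in Icc 0 T, thetaP p (Y s - Y' s) ∂μ) - (∫ s in Icc 0 T, thetaP p (Y s - Y' s) ∂μ')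
      ≤ (∫ s in Icc 0 T, thetaP p (L s - L' s) ∂μ)
        - (∫ s in Icc 0 T, thetaP p (L s - L' s) ∂μ') := by
  have hθ := monotone_thetaP hp.1.le
  have hint {f : ℝ → ℝ} (hf : ContinuousOn f (Icc 0 T)) (ν : Measure ℝ) [IsFiniteMeasure ν] :
      IntegrableOn (thetaP p ∘ f) (Icc 0 T) ν :=
    hθ.integrableOn_comp_of_continuousOn isCompact_Icc hf ν
  have hμ_le : ∫ s in Icc 0 T, thetaP p (Y s - Y' s) ∂μ
      ≤ ∫ s in Icc 0 T, thetaP p (L s - L' s) ∂μ := by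
    refine setIntegral_mono_ae_restrict (hint (hY.sub hY') μ) (hint (hL.sub hL') μ) ?_
    filter_upwards [ae_restrict_eq_of_measure_sep_ne_eq_zero measurableSet_Icc hμ,
      ae_restrict_mem measurableSet_Icc] with s hYs hs
    exact hθ (by linarith [hY'L' s hs])
  have hμ'_le : ∫ s in Icc 0 T, thetaP p (L s - L' s) ∂μ'
      ≤ ∫ s in Icc 0 T, thetaP p (Y s - Y' s) ∂μ' := by
    refine setIntegral_mono_ae_restrict (hint (hL.sub hL') μ') (hint (hY.sub hY') μ') ?_
    filter_upwards [ae_restrict_eq_of_measure_sep_ne_eq_zero measurableSet_Icc hμ',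
      ae_restrict_mem measurableSet_Icc] with s hY's hs
    exact hθ (by linarith [hYL s hs])
  linarith

/-- **Two-barrier reflection inequality** (intermediate claim in the proof of Lemma 2.4):
if `Y ≥ L`, `Y' ≥ L'`, `μ` is carried by `{Y = L}` and `μ'` by `{Y' = L'}`, then
`∫ θ_p(Y - Y') dμ - ∫ θ_p(Y - Y') dμ' ≤ ∫ θ_p(L - L') dμ - ∫ θ_p(L - L') dμ'`. -/
theorem two_barrier_reflection_inequality
    (T : ℝ) (hT : 0 < T) (p : ℝ) (hp : p ∈ Set.Ioo (1 : ℝ) 2)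
    (Y Y' L L' : ℝ → ℝ)
    (hY : ContinuousOn Y (Icc 0 T)) (hY' : ContinuousOn Y' (Icc 0 T))
    (hL : ContinuousOn L (Icc 0 T)) (hL' : ContinuousOn L' (Icc 0 T))
    (hYL : ∀ s ∈ Icc 0 T, L s ≤ Y s) (hY'L' : ∀ s ∈ Icc 0 T, L' s ≤ Y' s)
    (μ μ' : Measure ℝ) [IsFiniteMeasure μ] [IsFiniteMeasure μ']
    (hμ : μ {s ∈ Icc 0 T | Y s ≠ L s} = 0)
    (hμ' : μ' {s ∈ Icc 0 T | Y' s ≠ L' s} = 0) :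
    (∫ s in Icc 0 T, thetaP p (Y s - Y' s) ∂μ) - (∫ s in Icc 0 T, thetaP p (Y s - Y' s) ∂μ')
      ≤ (∫ s in Icc 0 T, thetaP p (L s - L' s) ∂μ)
        - (∫ s in Icc 0 T, thetaP p (L s - L' s) ∂μ') :=
  two_barrier_reflection_inequality_general T p hp Y Y' L L' hY hY' hL hL' hYL hY'L' μ μ' hμ hμ'
end
end
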